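/- arXiv:2503.05644 — 6 statements merged into one kernel-verified Lean document; each statement's English description precedes it below -/
import Mathlib

section
/- Suppose the pair (λ,β) is T-log-symplectic. Then for all j,k ∈ [1,n] with j ≠ k there exists at most one θ ∈ S(λ,β) with J_θ = {j,k}. In particular, S(λ,β) is a finite set of cardinality at most n(n−1)/2. -/
open Finset Matrix

noncomputable section

/-- The standard embedding of an integer vector into `ℂⁿ`. -/
def cvec {n : ℕ} (w : Fin n → ℤ) : Fin n → ℂ := fun j => (w j : ℂ)

/-- `J_w = { j : w_j = -1 }`. -/
def Jset {n : ℕ} (w : Fin n → ℤ) : Finset (Fin n) :=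
  Finset.univ.filter (fun j => w j = -1)

/-- The linear map `β : ℂⁿ → V`, `w ↦ ∑ w_j β_j`. -/
def bmap {n : ℕ} {V : Type*} [AddCommGroup V] [Module ℂ V]
    (β : Fin n → V) (w : Fin n → ℂ) : V :=
  ∑ j, w j • β j

/-- The pair `(λ, β)` is T-log-symplectic. -/
def TLogSymp {n : ℕ} {V : Type*} [AddCommGroup V] [Module ℂ V]
    (M : Matrix (Fin n) (Fin n) ℂ) (β : Fin n → V) : Prop :=
  ∀ w : Fin n → ℂ, M.mulVec w = 0 → bmap β w = 0 → w = 0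

/-- The set `W(λ, β)`. -/
def Wset {n : ℕ} {V : Type*} [AddCommGroup V] [Module ℂ V]
    (M : Matrix (Fin n) (Fin n) ℂ) (β : Fin n → V) : Set (Fin n → ℤ) :=
  {w | (∀ j, -1 ≤ w j) ∧ (∀ j, j ∉ Jset w → M.mulVec (cvec w) j = 0) ∧
    bmap β (cvec w) = 0}

/-- The set `S(λ, β)` of smoothable weights. -/
def Sset {n : ℕ} {V : Type*} [AddCommGroup V] [Module ℂ V]
    (M : Matrix (Fin n) (Fin n) ℂ) (β : Fin n → V) : Set (Fin n → ℤ) :=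
  {θ | θ ∈ Wset M β ∧ (Jset θ).card = 2}

/-- `S_m`: sums of exactly `m` elements of `S`, repetitions allowed. -/
def SumOf {n : ℕ} (S : Set (Fin n → ℤ)) (m : ℕ) : Set (Fin n → ℤ) :=
  {w | ∃ l : Multiset (Fin n → ℤ), (∀ x ∈ l, x ∈ S) ∧ Multiset.card l = m ∧ l.sum = w}

/-- `S_{≥ m}`: sums of at least `m` elements of `S`, repetitions allowed. -/
def SumGE {n : ℕ} (S : Set (Fin n → ℤ)) (m : ℕ) : Set (Fin n → ℤ) :=
  {w | ∃ m', m ≤ m' ∧ w ∈ SumOf S m'}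

/-- A vector `w ∈ ℤⁿ` is negatively bordered. -/
def NegBordered {n : ℕ} (w : Fin n → ℤ) : Prop :=
  ∃ j k : Fin n, j < k ∧ w j = -1 ∧ w k = -1 ∧ (∀ i, i < j → w i = 0) ∧
    (∀ i, k < i → w i = 0) ∧ (∀ i, j < i → i < k → 0 ≤ w i)

lemma skew_quad {n : ℕ} (M : Matrix (Fin n) (Fin n) ℂ) (hskew : Mᵀ = -M)
    (x : Fin n → ℂ) : x ⬝ᵥ M.mulVec x = 0 := by
  have h1 : x ⬝ᵥ M.mulVec x = (M.vecMul x) ⬝ᵥ x := dotProduct_mulVec x M x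
  have h2 : M.vecMul x = -(M.mulVec x) := by
    rw [← Matrix.mulVec_transpose, hskew, Matrix.neg_mulVec]
  rw [h2, neg_dotProduct] at h1
  rw [dotProduct_comm] at h1 ⊢
  linear_combination h1 / 2

lemma bmap_lin {n : ℕ} {V : Type*} [AddCommGroup V] [Module ℂ V]
    (β : Fin n → V) (a b : ℂ) (x y : Fin n → ℂ) :
    bmap β (a • x - b • y) = a • bmap β x - b • bmap β y := by
  simp only [bmap, Pi.sub_apply, Pi.smul_apply, smul_eq_mul, sub_smul,
    Finset.sum_sub_distrib, mul_smul, ← Finset.smul_sum]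

/-- Key: the two "boundary" values of `M θ` sum to zero. -/
lemma sum_key {n : ℕ} {V : Type*} [AddCommGroup V] [Module ℂ V]
    (M : Matrix (Fin n) (Fin n) ℂ) (hskew : Mᵀ = -M) (β : Fin n → V)
    {θ : Fin n → ℤ} (hθ : θ ∈ Sset M β) {j k : Fin n} (hjk : j ≠ k)
    (hJ : Jset θ = {j, k}) :
    M.mulVec (cvec θ) j + M.mulVec (cvec θ) k = 0 := by
  have hj : θ j = -1 := by
    have : j ∈ Jset θ := by rw [hJ]; simp
    simpa [Jset] using this
  have hk : θ k = -1 := by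
    have : k ∈ Jset θ := by rw [hJ]; simp
    simpa [Jset] using this
  have hq := skew_quad M hskew (cvec θ)
  have hsum : (cvec θ) ⬝ᵥ M.mulVec (cvec θ)
      = ∑ i ∈ ({j, k} : Finset (Fin n)), cvec θ i * M.mulVec (cvec θ) i := by
    rw [dotProduct]
    refine (Finset.sum_subset (Finset.subset_univ _) ?_).symm
    intro i _ hi
    have := hθ.1.2.1 i (by rw [hJ]; exact hi)
    simp [this]
  rw [hsum, Finset.sum_pair hjk] at hq
  have hcj : cvec θ j = -1 := by simp [cvec, hj]
  have hck : cvec θ k = -1 := by simp [cvec, hk]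
  rw [hcj, hck] at hq
  linear_combination -hq

theorem stmt0 (n : ℕ) (hn : 0 < n) (M : Matrix (Fin n) (Fin n) ℂ) (hskew : Mᵀ = -M)
    {V : Type*} [AddCommGroup V] [Module ℂ V] (β : Fin n → V)
    (hTLS : TLogSymp M β) :
    (∀ j k : Fin n, j ≠ k → ∀ θ ∈ Sset M β, ∀ θ' ∈ Sset M β,
        Jset θ = {j, k} → Jset θ' = {j, k} → θ = θ') ∧
    (Sset M β).Finite ∧ (Sset M β).ncard ≤ n * (n - 1) / 2 := by
  -- nonvanishing of boundary values
  have key : ∀ j k : Fin n, j ≠ k → ∀ θ ∈ Sset M β, ∀ θ' ∈ Sset M β,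
      Jset θ = {j, k} → Jset θ' = {j, k} → θ = θ' := by
    intro j k hjk θ hθ θ' hθ' hJ hJ'
    set A := M.mulVec (cvec θ) with hA
    set A' := M.mulVec (cvec θ') with hA'
    have hAk : A k = -(A j) := by
      have := sum_key M hskew β hθ hjk hJ; linear_combination this
    have hA'k : A' k = -(A' j) := by
      have := sum_key M hskew β hθ' hjk hJ'; linear_combination this
    have hmemJ : ∀ {w : Fin n → ℤ}, w ∈ Sset M β → Jset w = {j, k} →
        w j = -1 ∧ w k = -1 := by
      intro w hw hJw
      constructor
      · have : j ∈ Jset w := by rw [hJw]; simp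
        simpa [Jset] using this
      · have : k ∈ Jset w := by rw [hJw]; simp
        simpa [Jset] using this
    obtain ⟨hθj, hθk⟩ := hmemJ hθ hJ
    obtain ⟨hθ'j, hθ'k⟩ := hmemJ hθ' hJ'
    -- A j ≠ 0
    have hne : ∀ {w : Fin n → ℤ}, w ∈ Sset M β → Jset w = {j, k} →
        M.mulVec (cvec w) j ≠ 0 := by
      intro w hw hJw h0
      have hk0 : M.mulVec (cvec w) k = 0 := by
        have := sum_key M hskew β hw hjk hJw; rw [h0] at this; linear_combination this
      have hM0 : M.mulVec (cvec w) = 0 := by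
        funext i
        by_cases hi : i ∈ ({j, k} : Finset (Fin n))
        · rcases Finset.mem_insert.mp hi with h | h
          · rw [h]; exact h0
          · rw [Finset.mem_singleton.mp h]; exact hk0
        · exact hw.1.2.1 i (by rw [hJw]; exact hi)
      have hz := hTLS (cvec w) hM0 hw.1.2.2
      have hwj : w j = -1 := (hmemJ hw hJw).1
      have hzj : cvec w j = 0 := by rw [hz]; rfl
      simp [cvec, hwj] at hzj
    have haj : A j ≠ 0 := hne hθ hJ
    have ha'j : A' j ≠ 0 := hne hθ' hJ'
    -- the combination
    set v : Fin n → ℂ := A' j • cvec θ - A j • cvec θ' with hv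
    have hMv : M.mulVec v = 0 := by
      funext i
      have : M.mulVec v = A' j • A - A j • A' := by
        rw [hv, Matrix.mulVec_sub, Matrix.mulVec_smul, Matrix.mulVec_smul]
      rw [this]
      by_cases hi : i ∈ ({j, k} : Finset (Fin n))
      · rcases Finset.mem_insert.mp hi with h | h
        · subst h; simp [mul_comm]
        · rw [Finset.mem_singleton.mp h]
          simp only [Pi.sub_apply, Pi.smul_apply, smul_eq_mul, Pi.zero_apply, hAk, hA'k]
          ring
      · have h1 : A i = 0 := hθ.1.2.1 i (by rw [hJ]; exact hi)
        have h2 : A' i = 0 := hθ'.1.2.1 i (by rw [hJ']; exact hi)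
        simp [h1, h2]
    have hbv : bmap β v = 0 := by
      rw [hv, bmap_lin, hθ.1.2.2, hθ'.1.2.2]; simp
    have hv0 := hTLS v hMv hbv
    have heq : ∀ i, A' j * cvec θ i = A j * cvec θ' i := by
      intro i
      have := congrFun hv0 i
      simpa [hv, sub_eq_zero] using this
    have haa : A' j = A j := by
      have := heq j
      rw [show cvec θ j = ((θ j : ℤ) : ℂ) from rfl, hθj,
        show cvec θ' j = ((θ' j : ℤ) : ℂ) from rfl, hθ'j] at this
      push_cast at this
      linear_combination -this
    funext i
    have := heq i
    rw [haa] at this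
    have h2 : cvec θ i = cvec θ' i := mul_left_cancel₀ haj this
    have h3 : ((θ i : ℤ) : ℂ) = ((θ' i : ℤ) : ℂ) := h2
    exact_mod_cast h3
  refine ⟨key, ?_, ?_⟩
  · -- finiteness
    have hinj : (Sset M β).InjOn Jset := by
      intro θ hθ θ' hθ' hJJ
      obtain ⟨j, k, hjk, hJ⟩ := Finset.card_eq_two.mp hθ.2
      exact key j k hjk θ hθ θ' hθ' hJ (by rw [← hJJ, hJ])
    exact Set.Finite.of_finite_image (Set.toFinite _) hinj
  · have hinj : (Sset M β).InjOn Jset := by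
      intro θ hθ θ' hθ' hJJ
      obtain ⟨j, k, hjk, hJ⟩ := Finset.card_eq_two.mp hθ.2
      exact key j k hjk θ hθ θ' hθ' hJ (by rw [← hJJ, hJ])
    rw [← Set.ncard_image_of_injOn hinj]
    have hsub : Jset '' (Sset M β) ⊆ ↑((Finset.univ : Finset (Fin n)).powersetCard 2) := by
      rintro t ⟨θ, hθ, rfl⟩
      simp [Finset.mem_powersetCard, hθ.2]
    calc (Jset '' (Sset M β)).ncard
        ≤ (((Finset.univ : Finset (Fin n)).powersetCard 2 : Finset (Finset (Fin n))) : Set (Finset (Fin n))).ncard :=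
          Set.ncard_le_ncard hsub (Set.toFinite _)
      _ = ((Finset.univ : Finset (Fin n)).powersetCard 2).card := Set.ncard_coe_finset _
      _ = n.choose 2 := by rw [Finset.card_powersetCard, Finset.card_univ, Fintype.card_fin]
      _ = n * (n - 1) / 2 := Nat.choose_two_right n
end
end

section
/- Suppose the pair (λ,β) is T-log-symplectic. If θ ∈ S(λ,β), then −θ ∉ S(λ,β). -/
open Finset Matrix

noncomputable section

theorem stmt1 (n : ℕ) (hn : 0 < n) (M : Matrix (Fin n) (Fin n) ℂ) (hskew : Mᵀ = -M)
    {V : Type*} [AddCommGroup V] [Module ℂ V] (β : Fin n → V)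
    (hTLS : TLogSymp M β) (θ : Fin n → ℤ) (hθ : θ ∈ Sset M β) :
    -θ ∉ Sset M β := by
  intro hθ'
  obtain ⟨⟨h1, h2, h3⟩, hc⟩ := hθ
  obtain ⟨⟨h1', h2', h3'⟩, hc'⟩ := hθ'
  have hneg : cvec (-θ) = -cvec θ := by
    funext j; simp [cvec]
  have hM : M.mulVec (cvec θ) = 0 := by
    funext j
    by_cases h : θ j = -1
    · have hj' : j ∉ Jset (-θ) := by
        simp only [Jset, Finset.mem_filter, Finset.mem_univ, true_and, Pi.neg_apply]
        omega
      have := h2' j hj'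
      rw [hneg, Matrix.mulVec_neg] at this
      simpa using this
    · have hj : j ∉ Jset θ := by
        simp only [Jset, Finset.mem_filter, Finset.mem_univ, true_and]
        exact h
      simpa using h2 j hj
  have hz : cvec θ = 0 := hTLS (cvec θ) hM h3
  have hne : (Jset θ).Nonempty := by
    rw [← Finset.card_pos, hc]; norm_num
  obtain ⟨j, hj⟩ := hne
  simp only [Jset, Finset.mem_filter, Finset.mem_univ, true_and] at hj
  have : cvec θ j = 0 := by rw [hz]; rfl
  rw [cvec, hj] at this
  norm_num at this
end
end

section
/- Suppose the pair (λ,β) is T-log-symplectic. Let i, j, k ∈ [1,n] be pairwise distinct, let θ, θ' ∈ S(λ,β) with J_θ = {i,j} and J_{θ'} = {j,k}, and let a, a' ∈ ℂ be such that λθ = a(e_i − e_j) and λθ' = a'(e_j − e_k). Then a ≠ 0, a' ≠ 0, a(1 + θ'_i) = a'(1 + θ_k), and a/a' is a positive rational number. -/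
open Finset Matrix

noncomputable section

theorem stmt2 (n : ℕ) (hn : 0 < n) (M : Matrix (Fin n) (Fin n) ℂ) (hskew : Mᵀ = -M)
    {V : Type*} [AddCommGroup V] [Module ℂ V] (β : Fin n → V)
    (hTLS : TLogSymp M β)
    (i j k : Fin n) (hij : i ≠ j) (hjk : j ≠ k) (hik : i ≠ k)
    (θ θ' : Fin n → ℤ) (hθ : θ ∈ Sset M β) (hθ' : θ' ∈ Sset M β)
    (hJ : Jset θ = {i, j}) (hJ' : Jset θ' = {j, k})
    (a a' : ℂ)
    (ha : M.mulVec (cvec θ) = a • ((Pi.single i 1 : Fin n → ℂ) - Pi.single j 1))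
    (ha' : M.mulVec (cvec θ') = a' • ((Pi.single j 1 : Fin n → ℂ) - Pi.single k 1)) :
    a ≠ 0 ∧ a' ≠ 0 ∧ a * (1 + (θ' i : ℂ)) = a' * (1 + (θ k : ℂ)) ∧
      ∃ q : ℚ, 0 < q ∧ a = (q : ℂ) * a' := by

  obtain ⟨⟨hge, hzero, hβ⟩, hcard⟩ := hθ
  obtain ⟨⟨hge', hzero', hβ'⟩, hcard'⟩ := hθ'
  have hθi : θ i = -1 := by
    have h : i ∈ Jset θ := by rw [hJ]; simp
    simpa [Jset] using h
  have hθ'j : θ' j = -1 := by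
    have h : j ∈ Jset θ' := by rw [hJ']; simp
    simpa [Jset] using h
  have hθj : θ j = -1 := by
    have h : j ∈ Jset θ := by rw [hJ]; simp
    simpa [Jset] using h
  have hθ'i0 : 0 ≤ θ' i := by
    have h1 := hge' i
    have h2 : θ' i ≠ -1 := by
      have : i ∉ Jset θ' := by rw [hJ']; simp [hij, hik]
      simpa [Jset] using this
    omega
  have hθk0 : 0 ≤ θ k := by
    have h1 := hge k
    have h2 : θ k ≠ -1 := by
      have : k ∉ Jset θ := by rw [hJ]; simp [hik.symm, hjk.symm]
      simpa [Jset] using this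
    omega
  have hane : a ≠ 0 := by
    intro h
    have hM : M.mulVec (cvec θ) = 0 := by rw [ha, h, zero_smul]
    have h0 := hTLS (cvec θ) hM hβ
    have : cvec θ i = 0 := by rw [h0]; rfl
    simp [cvec, hθi] at this
  have hane' : a' ≠ 0 := by
    intro h
    have hM : M.mulVec (cvec θ') = 0 := by rw [ha', h, zero_smul]
    have h0 := hTLS (cvec θ') hM hβ'
    have : cvec θ' j = 0 := by rw [h0]; rfl
    simp [cvec, hθ'j] at this
  have key : a * (1 + (θ' i : ℂ)) = a' * (1 + (θ k : ℂ)) := by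
    have h1 : cvec θ' ⬝ᵥ M.mulVec (cvec θ) = -(M.mulVec (cvec θ') ⬝ᵥ cvec θ) := by
      rw [Matrix.dotProduct_mulVec]
      have hv : Matrix.vecMul (cvec θ') M = -(M.mulVec (cvec θ')) := by
        have : Matrix.vecMul (cvec θ') ((Mᵀ)ᵀ) = Mᵀ.mulVec (cvec θ') := by
          rw [Matrix.vecMul_transpose]
        rw [Matrix.transpose_transpose] at this
        rw [this, hskew, Matrix.neg_mulVec]
      rw [hv, neg_dotProduct]
    rw [ha, ha'] at h1
    have hL : cvec θ' ⬝ᵥ (a • ((Pi.single i 1 : Fin n → ℂ) - Pi.single j 1))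
        = a * (cvec θ' i - cvec θ' j) := by
      simp [dotProduct_smul, dotProduct_sub, dotProduct_single,
        smul_eq_mul]
    have hR : (a' • ((Pi.single j 1 : Fin n → ℂ) - Pi.single k 1)) ⬝ᵥ cvec θ
        = a' * (cvec θ j - cvec θ k) := by
      simp [smul_dotProduct, sub_dotProduct, single_dotProduct,
        smul_eq_mul]
    rw [hL, hR] at h1
    have e1 : cvec θ' j = -1 := by simp [cvec, hθ'j]
    have e2 : cvec θ j = -1 := by simp [cvec, hθj]
    have e3 : cvec θ' i = (θ' i : ℂ) := rfl
    have e4 : cvec θ k = (θ k : ℂ) := rfl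
    rw [e1, e2, e3, e4] at h1
    linear_combination h1
  refine ⟨hane, hane', key, ((1 + θ k : ℚ) / (1 + θ' i : ℚ)), ?_, ?_⟩
  · apply div_pos
    · exact_mod_cast (by omega : (0:ℤ) < 1 + θ k)
    · exact_mod_cast (by omega : (0:ℤ) < 1 + θ' i)
  · have hd : ((1 : ℂ) + (θ' i : ℂ)) ≠ 0 := by
      have h0 : ((1 + θ' i : ℤ) : ℂ) ≠ 0 := Int.cast_ne_zero.mpr (by omega)
      push_cast at h0
      exact h0
    have hq : ((((1 + θ k : ℚ) / (1 + θ' i : ℚ)) : ℚ) : ℂ)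
        = (1 + (θ k : ℂ)) / (1 + (θ' i : ℂ)) := by push_cast; ring
    rw [hq, div_mul_eq_mul_div, eq_div_iff hd]
    linear_combination key
end
end

section
/- Suppose the pair (λ,β) is T-log-symplectic and let S be a nonempty subset of S(λ,β). The following are equivalent: (1) S is linearly independent over ℂ as a subset of ℂ^n; (2) S is linearly independent over ℤ, i.e. the only family of integers (m_θ)_{θ∈S} with Σ_θ m_θ θ = 0 is the zero family; (3) 0 ∉ S_{≥1}. -/
open Finset Matrix

noncomputable section

/-!
A smoothable weight `θ` with poles `J_θ = {j, k}` satisfies `λ θ = c (e_j - e_k)` with `c ≠ 0`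
(skew-symmetry, and T-log-symplecticity since `β θ = 0`), and it is determined by its poles.
The weights occurring in a complex linear relation therefore span a graph on their poles with no
vertex of degree one, which contains a cycle. Skew-symmetry makes the ratios of consecutive
coefficients `c` along the cycle positive rationals, so positive integer multiples of its weights
have images under `λ` that telescope to zero; being also in `ker β`, they sum to zero.
Complex and integral independence agree by base change.
-/

section Weights

variable {n : ℕ} {V : Type*} [AddCommGroup V] [Module ℂ V]
  {M : Matrix (Fin n) (Fin n) ℂ} {β : Fin n → V}

lemma cvec_injective : Function.Injective (cvec (n := n)) :=
  fun _ _ h => funext fun j => Int.cast_injective (congrFun h j)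

lemma cvec_sum_nsmul {ι : Type*} (s : Finset ι) (m : ι → ℕ) (θ : ι → Fin n → ℤ) :
    cvec (∑ i ∈ s, m i • θ i) = ∑ i ∈ s, (m i : ℂ) • cvec (θ i) := by
  ext j
  simp [cvec, Finset.sum_apply]

lemma bmap_eq_linearCombination : bmap β = Fintype.linearCombination ℂ β := by
  ext w
  simp [bmap, Fintype.linearCombination_apply]

lemma dotProduct_mulVec_of_transpose_eq_neg (hskew : Mᵀ = -M) (x y : Fin n → ℂ) :
    x ⬝ᵥ M *ᵥ y = -(y ⬝ᵥ M *ᵥ x) := by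
  rw [dotProduct_mulVec, ← mulVec_transpose, hskew, neg_mulVec, neg_dotProduct, dotProduct_comm]

lemma mem_Jset {w : Fin n → ℤ} {a : Fin n} : a ∈ Jset w ↔ w a = -1 := by
  simp [Jset]

lemma nonneg_of_mem_Wset_of_notMem_Jset {w : Fin n → ℤ} (hw : w ∈ Wset M β) {a : Fin n}
    (ha : a ∉ Jset w) : 0 ≤ w a := by
  have := hw.1 a
  have : w a ≠ -1 := fun h => ha (mem_Jset.2 h)
  omega

lemma mulVec_cvec_eq_of_mem_Wset (hskew : Mᵀ = -M) {w : Fin n → ℤ} (hw : w ∈ Wset M β)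
    {j k : Fin n} (hjk : j ≠ k) (hJ : Jset w = {j, k}) :
    M *ᵥ cvec w = (M *ᵥ cvec w) j • (Pi.single j 1 - Pi.single k 1) := by
  have hoff : ∀ i, i ≠ j → i ≠ k → (M *ᵥ cvec w) i = 0 := fun i hij hik =>
    hw.2.1 i (by simp [hJ, hij, hik])
  have hwj : cvec w j = -1 := by simp [cvec, mem_Jset.1 (hJ ▸ mem_insert_self j {k})]
  have hwk : cvec w k = -1 := by
    simp [cvec, mem_Jset.1 (hJ ▸ mem_insert_of_mem (mem_singleton_self k))]
  have hquad : cvec w ⬝ᵥ M *ᵥ cvec w = 0 := by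
    have := dotProduct_mulVec_of_transpose_eq_neg hskew (cvec w) (cvec w)
    linear_combination this / 2
  have hk : (M *ᵥ cvec w) k = -(M *ᵥ cvec w) j := by
    rw [dotProduct, ← Finset.sum_subset (subset_univ {j, k}) (fun i _ hi => by
      simp only [mem_insert, mem_singleton, not_or] at hi
      rw [hoff i hi.1 hi.2, mul_zero]), sum_pair hjk, hwj, hwk] at hquad
    linear_combination -hquad
  ext i
  by_cases hij : i = j
  · subst hij; simp [hjk]
  by_cases hik : i = k
  · subst hik; simp [hij, hk]
  simp [hoff i hij hik, hij, hik]

lemma mulVec_cvec_apply_ne_zero (hskew : Mᵀ = -M) (hTLS : TLogSymp M β) {w : Fin n → ℤ}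
    (hw : w ∈ Wset M β) {j k : Fin n} (hjk : j ≠ k) (hJ : Jset w = {j, k}) :
    (M *ᵥ cvec w) j ≠ 0 := by
  intro h0
  have hw0 := hTLS _ (by rw [mulVec_cvec_eq_of_mem_Wset hskew hw hjk hJ, h0, zero_smul]) hw.2.2
  have hwj : w j = -1 := mem_Jset.1 (hJ ▸ mem_insert_self j {k})
  simpa [cvec, hwj] using congrFun hw0 j

lemma eq_of_Jset_eq (hskew : Mᵀ = -M) (hTLS : TLogSymp M β) {θ θ' : Fin n → ℤ}
    (hθ : θ ∈ Sset M β) (hθ' : θ' ∈ Sset M β) (hJJ : Jset θ = Jset θ') : θ = θ' := by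
  obtain ⟨j, k, hjk, hJ⟩ := card_eq_two.1 hθ.2
  set c := (M *ᵥ cvec θ) j
  set c' := (M *ᵥ cvec θ') j
  have hc : c ≠ 0 := mulVec_cvec_apply_ne_zero hskew hTLS hθ.1 hjk hJ
  have hu : c' • cvec θ - c • cvec θ' = 0 := by
    refine hTLS _ ?_ ?_
    · rw [mulVec_sub, mulVec_smul, mulVec_smul, mulVec_cvec_eq_of_mem_Wset hskew hθ.1 hjk hJ,
        mulVec_cvec_eq_of_mem_Wset hskew hθ'.1 hjk (hJJ ▸ hJ), smul_smul, smul_smul, mul_comm,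
        sub_self]
    · rw [bmap_eq_linearCombination, map_sub, map_smul, map_smul, ← bmap_eq_linearCombination,
        hθ.1.2.2, hθ'.1.2.2, smul_zero, smul_zero, sub_self]
  have hθj : θ j = -1 := mem_Jset.1 (hJ ▸ mem_insert_self j {k})
  have hθ'j : θ' j = -1 := mem_Jset.1 (hJJ ▸ hJ ▸ mem_insert_self j {k})
  have hcc : c' = c := by
    have := congrFun hu j
    simp only [Pi.sub_apply, Pi.smul_apply, smul_eq_mul, Pi.zero_apply, cvec, hθj, hθ'j] at this
    push_cast at this
    linear_combination -this
  rw [hcc, ← smul_sub, smul_eq_zero, sub_eq_zero] at hu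
  exact cvec_injective (hu.resolve_left hc)

end Weights

section Cycle

variable {α ι : Type*} [DecidableEq ι] {T : Set α} {J : α → Finset ι}

lemma Finset.exists_eq_pair_of_card_eq_two {s : Finset ι} (hs : s.card = 2) {a : ι}
    (ha : a ∈ s) : ∃ b, s = {a, b} := by
  obtain ⟨x, y, -, rfl⟩ := card_eq_two.1 hs
  rcases mem_insert.1 ha with rfl | ha
  · exact ⟨y, rfl⟩
  · rw [mem_singleton.1 ha]
    exact ⟨x, pair_comm _ _⟩

lemma exists_nonbacktracking_walk (hT : T.Nonempty) (hcard : ∀ x ∈ T, (J x).card = 2)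
    (hdeg : ∀ x ∈ T, ∀ a ∈ J x, ∃ y ∈ T, y ≠ x ∧ a ∈ J y) :
    ∃ (e : ℕ → α) (v : ℕ → ι), (∀ i, e i ∈ T) ∧ (∀ i, J (e i) = {v i, v (i + 1)}) ∧
      ∀ i, e (i + 1) ≠ e i := by
  let Edge := {z : α × ι × ι // z.1 ∈ T ∧ J z.1 = {z.2.1, z.2.2}}
  have hstep : ∀ z : Edge, ∃ z' : Edge, z'.1.2.1 = z.1.2.2 ∧ z'.1.1 ≠ z.1.1 := by
    rintro ⟨⟨x, a, b⟩, hx, hJx⟩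
    obtain ⟨y, hy, hyx, hby⟩ := hdeg x hx b (hJx ▸ by simp)
    obtain ⟨c, hc⟩ := Finset.exists_eq_pair_of_card_eq_two (hcard y hy) hby
    exact ⟨⟨(y, b, c), hy, hc⟩, rfl, hyx⟩
  choose next hnext using hstep
  obtain ⟨x, hx⟩ := hT
  obtain ⟨a, b, -, hab⟩ := card_eq_two.1 (hcard x hx)
  let walk : ℕ → Edge := fun i => next^[i] ⟨(x, a, b), hx, hab⟩
  have hwalk : ∀ i, walk (i + 1) = next (walk i) := fun i =>
    Function.iterate_succ_apply' next i _
  refine ⟨fun i => (walk i).1.1, fun i => (walk i).1.2.1, fun i => (walk i).2.1, fun i => ?_,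
    fun i => ?_⟩
  · simp only [(walk i).2.2, hwalk, (hnext _).1]
  · simp only [hwalk]
    exact (hnext _).2

/-- Read `J x` (`x ∈ T`) as the edges of a graph on `ι`. If no vertex has degree one and no two
edges are parallel, a non-backtracking walk closes up into a closed walk `v 0, …, v L = v 0` in
which vertices two steps apart differ (so `L ≥ 3`). -/
theorem exists_cycle [Finite ι] (hT : T.Nonempty) (hcard : ∀ x ∈ T, (J x).card = 2)
    (hinj : Set.InjOn J T) (hdeg : ∀ x ∈ T, ∀ a ∈ J x, ∃ y ∈ T, y ≠ x ∧ a ∈ J y) :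
    ∃ L, 0 < L ∧ ∃ (e : ℕ → α) (v : ℕ → ι), (∀ i, e i ∈ T) ∧
      (∀ i, J (e i) = {v i, v (i + 1)}) ∧ (∀ i, i + 2 ≤ L → v i ≠ v (i + 2)) ∧ v L = v 0 := by
  obtain ⟨e, v, he, hJ, hback⟩ := exists_nonbacktracking_walk hT hcard hdeg
  have hrep : ∃ q, ∃ p < q, v p = v q := by
    obtain ⟨p, q, hpq, hv⟩ := Finite.exists_ne_map_eq_of_infinite v
    rcases hpq.lt_or_gt with h | h
    · exact ⟨q, p, h, hv⟩
    · exact ⟨p, q, h, hv.symm⟩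
  obtain ⟨p, hpq, hvpq⟩ := Nat.find_spec hrep
  set q := Nat.find hrep
  have hmin : ∀ a b, a < b → b < q → v a ≠ v b := fun a b hab hbq hv =>
    Nat.find_min hrep hbq ⟨a, hab, hv⟩
  have hstep : ∀ i, v i ≠ v (i + 1) := fun i => card_pair_eq_two_iff.1 (hJ i ▸ hcard _ (he i))
  have hv2 : ∀ i, p + i + 2 ≤ q → v (p + i) ≠ v (p + i + 2) := by
    intro i hi
    rcases hi.lt_or_eq with hi | hi
    · exact hmin _ _ (by omega) hi
    rw [hi, ← hvpq]
    rcases Nat.eq_zero_or_pos i with rfl | hi0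
    · intro hv
      refine hback p (hinj (he _) (he _) ?_)
      rw [hJ, hJ, pair_comm, ← hv, add_zero, show p + 1 + 1 = q by omega, ← hvpq]
    · exact (hmin p (p + i) (by omega) (by omega)).symm
  refine ⟨q - p, by omega, fun i => e (p + i), fun i => v (p + i), fun i => he _, fun i => hJ _,
    fun i hi => hv2 i (by omega), ?_⟩
  simp only [add_zero, Nat.add_sub_cancel' hpq.le, hvpq]

end Cycle

lemma exists_pos_nat_mul_eq_const {K : Type*} [Field K] [CharZero K] {L : ℕ} {d : ℕ → K}
    {A B : ℕ → ℕ} (hA : ∀ i, i + 1 < L → 0 < A i) (hB : ∀ i, i + 1 < L → 0 < B i)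
    (h : ∀ i, i + 1 < L → d i * A i = d (i + 1) * B i) :
    ∃ m : ℕ → ℕ, (∀ i < L, 0 < m i) ∧ ∀ i < L, (m i : K) * d i = m 0 * d 0 := by
  set m : ℕ → ℕ := fun i => (∏ k ∈ range i, B k) * ∏ k ∈ Ico i (L - 1), A k
  have hrec : ∀ i, i + 1 < L → m (i + 1) * A i = m i * B i := by
    intro i hi
    simp only [m, prod_range_succ, prod_eq_prod_Ico_succ_bot (show i < L - 1 by omega) A]
    ring
  refine ⟨m, fun i hi => ?_, fun i hi => ?_⟩
  · exact Nat.mul_pos (prod_pos fun k hk => hB k (by simp at hk; omega))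
      (prod_pos fun k hk => hA k (by simp at hk; omega))
  induction i with
  | zero => rfl
  | succ i ih =>
    have hBi : (B i : K) ≠ 0 := Nat.cast_ne_zero.2 (hB i hi).ne'
    apply mul_right_cancel₀ hBi
    calc (m (i + 1) : K) * d (i + 1) * B i = ((m (i + 1) * A i : ℕ) : K) * d i := by
          push_cast; linear_combination -(m (i + 1) : K) * h i hi
      _ = ((m i * B i : ℕ) : K) * d i := by rw [hrec i hi]
      _ = m 0 * d 0 * B i := by push_cast; rw [← ih (by omega)]; ring

section CycleRelation

variable {n : ℕ} {V : Type*} [AddCommGroup V] [Module ℂ V]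
  {M : Matrix (Fin n) (Fin n) ℂ} {β : Fin n → V}

lemma mul_add_one_eq_of_mulVec_eq (hskew : Mᵀ = -M) {x y : Fin n → ℂ} {a b c : Fin n}
    {d d' : ℂ} (hx : M *ᵥ x = d • (Pi.single a 1 - Pi.single b 1))
    (hy : M *ᵥ y = d' • (Pi.single b 1 - Pi.single c 1)) (hxb : x b = -1) (hyb : y b = -1) :
    d * (y a + 1) = d' * (x c + 1) := by
  have := dotProduct_mulVec_of_transpose_eq_neg hskew y x
  rw [hx, hy] at this
  simp only [dotProduct_smul, dotProduct_sub, dotProduct_single, mul_one, hxb, hyb,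
    smul_eq_mul] at this
  linear_combination this

/-- Along a cycle of poles, the coefficients `d i` of `λ θ_i = d i (e_{v i} - e_{v (i+1)})` have
positive rational ratios, so rescaling the `θ_i` by positive integers makes all `d i` equal and
the images under `λ` telescope to zero. -/
theorem exists_pos_sum_nsmul_eq_zero_of_cycle (hskew : Mᵀ = -M) (hTLS : TLogSymp M β)
    {L : ℕ} {θ : ℕ → Fin n → ℤ} {v : ℕ → Fin n} (hθ : ∀ i < L, θ i ∈ Sset M β)
    (hJ : ∀ i < L, Jset (θ i) = {v i, v (i + 1)}) (hv : ∀ i, i + 2 ≤ L → v i ≠ v (i + 2))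
    (hvL : v L = v 0) :
    ∃ m : ℕ → ℕ, (∀ i < L, 0 < m i) ∧ ∑ i ∈ range L, m i • θ i = 0 := by
  have hv1 : ∀ i < L, v i ≠ v (i + 1) := fun i hi =>
    card_pair_eq_two_iff.1 (hJ i hi ▸ (hθ i hi).2)
  set d : ℕ → ℂ := fun i => (M *ᵥ cvec (θ i)) (v i)
  have hMθ : ∀ i < L, M *ᵥ cvec (θ i) = d i • (Pi.single (v i) 1 - Pi.single (v (i + 1)) 1) :=
    fun i hi => mulVec_cvec_eq_of_mem_Wset hskew (hθ i hi).1 (hv1 i hi) (hJ i hi)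
  have hpole : ∀ i < L, ∀ j ∈ ({v i, v (i + 1)} : Finset (Fin n)), cvec (θ i) j = -1 :=
    fun i hi j hj => by simp [cvec, mem_Jset.1 (hJ i hi ▸ hj)]
  have hA : ∀ i, i + 1 < L → 0 ≤ θ (i + 1) (v i) := fun i hi =>
    nonneg_of_mem_Wset_of_notMem_Jset (hθ (i + 1) hi).1
      (by simp [hJ _ hi, hv1 i (by omega), hv i (by omega)])
  have hB : ∀ i, i + 1 < L → 0 ≤ θ i (v (i + 2)) := fun i hi =>
    nonneg_of_mem_Wset_of_notMem_Jset (hθ i (by omega)).1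
      (by simp [hJ i (by omega), (hv i (by omega)).symm, (hv1 (i + 1) hi).symm])
  have hcast : ∀ x : ℤ, 0 ≤ x → ((x.toNat + 1 : ℕ) : ℂ) = x + 1 := fun x hx => by
    rw [Nat.cast_add, Nat.cast_one, ← Int.cast_natCast, Int.toNat_of_nonneg hx]
  obtain ⟨m, hm, hmd⟩ := exists_pos_nat_mul_eq_const (K := ℂ) (L := L) (d := d)
    (A := fun i => (θ (i + 1) (v i)).toNat + 1) (B := fun i => (θ i (v (i + 2))).toNat + 1)
    (fun _ _ => Nat.succ_pos _) (fun _ _ => Nat.succ_pos _) (fun i hi => by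
      rw [hcast _ (hA i hi), hcast _ (hB i hi)]
      exact mul_add_one_eq_of_mulVec_eq hskew (hMθ i (by omega)) (hMθ (i + 1) hi)
        (hpole i (by omega) _ (by simp)) (hpole (i + 1) hi _ (by simp)))
  have hK : ∀ i ∈ range L, (m i : ℂ) • M *ᵥ cvec (θ i) =
      (m 0 * d 0 : ℂ) • (Pi.single (v i) 1 - Pi.single (v (i + 1)) 1) := fun i hi => by
    rw [hMθ i (mem_range.1 hi), smul_smul, hmd i (mem_range.1 hi)]
  refine ⟨m, hm, cvec_injective ((hTLS _ ?_ ?_).trans (by ext; simp [cvec]))⟩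
  · simp only [cvec_sum_nsmul, mulVec_sum, mulVec_smul]
    rw [sum_congr rfl hK, ← smul_sum, sum_range_sub' (fun i => (Pi.single (v i) 1 : Fin n → ℂ)),
      hvL, sub_self, smul_zero]
  · rw [cvec_sum_nsmul, bmap_eq_linearCombination, map_sum]
    exact sum_eq_zero fun i hi => by
      rw [map_smul, ← bmap_eq_linearCombination, (hθ i (mem_range.1 hi)).1.2.2, smul_zero]

end CycleRelation

section SumGE

variable {n : ℕ} {S : Set (Fin n → ℤ)}

lemma mem_SumGE_one_iff {w : Fin n → ℤ} :
    w ∈ SumGE S 1 ↔ ∃ l : Multiset (Fin n → ℤ), l ≠ 0 ∧ (∀ x ∈ l, x ∈ S) ∧ l.sum = w := by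
  constructor
  · rintro ⟨m, hm, l, hlS, hl, rfl⟩
    exact ⟨l, fun h => by simp [h] at hl; omega, hlS, rfl⟩
  · rintro ⟨l, hl, hlS, rfl⟩
    exact ⟨_, Multiset.card_pos.2 hl, l, hlS, rfl, rfl⟩

lemma sum_nsmul_mem_SumGE_one {ι : Type*} {s : Finset ι} (hs : s.Nonempty) {m : ι → ℕ}
    (hm : ∀ i ∈ s, 0 < m i) {θ : ι → Fin n → ℤ} (hθ : ∀ i ∈ s, θ i ∈ S) :
    ∑ i ∈ s, m i • θ i ∈ SumGE S 1 := by
  refine mem_SumGE_one_iff.2 ⟨s.val.bind fun i => Multiset.replicate (m i) (θ i), ?_, ?_, ?_⟩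
  · obtain ⟨i, hi⟩ := hs
    exact Multiset.card_pos.1 <| Multiset.card_pos_iff_exists_mem.2
      ⟨θ i, Multiset.mem_bind.2 ⟨i, hi, Multiset.mem_replicate.2 ⟨(hm i hi).ne', rfl⟩⟩⟩
  · intro x hx
    obtain ⟨i, hi, hx⟩ := Multiset.mem_bind.1 hx
    exact Multiset.eq_of_mem_replicate hx ▸ hθ i hi
  · simp only [Multiset.sum_bind, Multiset.sum_replicate]
    rfl

lemma zero_notMem_SumGE_one_of_linearIndepOn (h : LinearIndepOn ℤ id S) :
    (0 : Fin n → ℤ) ∉ SumGE S 1 := by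
  intro h0
  obtain ⟨l, hl, hlS, hsum⟩ := mem_SumGE_one_iff.1 h0
  obtain ⟨x, hx⟩ := Multiset.exists_mem_of_ne_zero hl
  have hcount := linearIndepOn_iff'.1 h l.toFinset (fun θ => (l.count θ : ℤ))
    (fun θ hθ => hlS θ (Multiset.mem_toFinset.1 hθ))
    (by simpa [Finset.sum_multiset_count] using hsum) x (Multiset.mem_toFinset.2 hx)
  exact Multiset.count_ne_zero.2 hx (by exact_mod_cast hcount)

lemma linearIndependent_cvec_iff_linearIndepOn :
    LinearIndependent ℂ (fun θ : S => cvec (θ : Fin n → ℤ)) ↔ LinearIndepOn ℤ id S := by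
  have hcvec : (fun θ : S => cvec (θ : Fin n → ℤ)) = fun θ => algebraMap ℤ ℂ ∘ θ.1 := by
    ext; simp [cvec]
  rw [hcvec, linearIndependent_algebraMap_comp_iff]
  rfl

end SumGE

section Dependence

variable {n : ℕ} {V : Type*} [AddCommGroup V] [Module ℂ V]
  {M : Matrix (Fin n) (Fin n) ℂ} {β : Fin n → V} {S : Set (Fin n → ℤ)}

/-- Otherwise coordinate `a` of the image of the combination under `λ` would be the single nonzero
term `l θ (λ θ)_a`. -/
lemma exists_ne_mem_Jset_of_linearCombination_eq_zero (hskew : Mᵀ = -M) (hTLS : TLogSymp M β)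
    (hS : S ⊆ Sset M β) {l : S →₀ ℂ}
    (hl : Finsupp.linearCombination ℂ (fun θ : S => cvec (θ : Fin n → ℤ)) l = 0) {θ : S}
    (hθ : θ ∈ l.support) {a : Fin n} (ha : a ∈ Jset (θ : Fin n → ℤ)) :
    ∃ θ' ∈ l.support, θ' ≠ θ ∧ a ∈ Jset (θ' : Fin n → ℤ) := by
  by_contra! hcon
  obtain ⟨b, hab⟩ := Finset.exists_eq_pair_of_card_eq_two (hS θ.2).2 ha
  have hMl : ∑ θ' ∈ l.support, l θ' • M *ᵥ cvec θ' = 0 := by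
    simpa [Finsupp.linearCombination_apply, Finsupp.sum, mulVec_sum, mulVec_smul] using
      congrArg (M *ᵥ ·) hl
  have ha0 := congrFun hMl a
  rw [Finset.sum_apply, Finset.sum_eq_single_of_mem θ hθ fun θ' hθ' hne => by
    simp [(hS θ'.2).1.2.1 a (hcon θ' hθ' hne)]] at ha0
  exact mul_ne_zero (Finsupp.mem_support_iff.1 hθ)
    (mulVec_cvec_apply_ne_zero hskew hTLS (hS θ.2).1
      (card_pair_eq_two_iff.1 (hab ▸ (hS θ.2).2)) hab) (by simpa using ha0)

theorem zero_mem_SumGE_one_of_not_linearIndependent (hskew : Mᵀ = -M) (hTLS : TLogSymp M β)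
    (hS : S ⊆ Sset M β) (h : ¬ LinearIndependent ℂ (fun θ : S => cvec (θ : Fin n → ℤ))) :
    (0 : Fin n → ℤ) ∈ SumGE S 1 := by
  obtain ⟨l, hl, hl0⟩ : ∃ l : S →₀ ℂ,
      Finsupp.linearCombination ℂ (fun θ : S => cvec (θ : Fin n → ℤ)) l = 0 ∧ l ≠ 0 := by
    simpa [linearIndependent_iff] using h
  obtain ⟨L, hL, e, v, he, hJ, hv, hvL⟩ := exists_cycle (T := (l.support : Set S))
    (J := fun θ => Jset (θ : Fin n → ℤ))
    (Finset.coe_nonempty.2 (Finsupp.support_nonempty_iff.2 hl0))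
    (fun θ _ => (hS θ.2).2)
    (fun θ _ θ' _ h => Subtype.ext (eq_of_Jset_eq hskew hTLS (hS θ.2) (hS θ'.2) h))
    (fun θ hθ a ha => exists_ne_mem_Jset_of_linearCombination_eq_zero hskew hTLS hS hl hθ ha)
  obtain ⟨m, hm, hsum⟩ := exists_pos_sum_nsmul_eq_zero_of_cycle hskew hTLS
    (θ := fun i => (e i : Fin n → ℤ)) (fun i _ => hS (e i).2) (fun i _ => hJ i) hv hvL
  exact hsum ▸ sum_nsmul_mem_SumGE_one (nonempty_range_iff.2 hL.ne')
    (fun i hi => hm i (mem_range.1 hi)) (fun i _ => (e i).2)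

end Dependence

theorem stmt4_general (n : ℕ) (M : Matrix (Fin n) (Fin n) ℂ) (hskew : Mᵀ = -M)
    {V : Type*} [AddCommGroup V] [Module ℂ V] (β : Fin n → V)
    (hTLS : TLogSymp M β) (S : Set (Fin n → ℤ)) (hS : S ⊆ Sset M β) :
    ((LinearIndependent ℂ (fun θ : S => cvec (θ : Fin n → ℤ))) ↔
      (∀ t : Finset (Fin n → ℤ), ↑t ⊆ S → ∀ m : (Fin n → ℤ) → ℤ,
        ∑ θ ∈ t, m θ • θ = 0 → ∀ θ ∈ t, m θ = 0)) ∧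
    ((∀ t : Finset (Fin n → ℤ), ↑t ⊆ S → ∀ m : (Fin n → ℤ) → ℤ,
        ∑ θ ∈ t, m θ • θ = 0 → ∀ θ ∈ t, m θ = 0) ↔
      (0 : Fin n → ℤ) ∉ SumGE S 1) := by
  have h2 : (∀ t : Finset (Fin n → ℤ), ↑t ⊆ S → ∀ m : (Fin n → ℤ) → ℤ,
      ∑ θ ∈ t, m θ • θ = 0 → ∀ θ ∈ t, m θ = 0) ↔ LinearIndepOn ℤ id S :=
    linearIndepOn_iff'.trans ⟨fun h t ht m => h t m ht, fun h t m ht => h t ht m⟩ |>.symm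
  have hdep := zero_mem_SumGE_one_of_not_linearIndependent hskew hTLS hS
  rw [h2]
  rw [linearIndependent_cvec_iff_linearIndepOn] at hdep ⊢
  exact ⟨Iff.rfl, zero_notMem_SumGE_one_of_linearIndepOn, not_imp_comm.1 hdep⟩

theorem stmt4 (n : ℕ) (hn : 0 < n) (M : Matrix (Fin n) (Fin n) ℂ) (hskew : Mᵀ = -M)
    {V : Type*} [AddCommGroup V] [Module ℂ V] (β : Fin n → V)
    (hTLS : TLogSymp M β) (S : Set (Fin n → ℤ)) (hS : S ⊆ Sset M β)
    (hne : S.Nonempty) :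
    ((LinearIndependent ℂ (fun θ : S => cvec (θ : Fin n → ℤ))) ↔
      (∀ t : Finset (Fin n → ℤ), ↑t ⊆ S → ∀ m : (Fin n → ℤ) → ℤ,
        ∑ θ ∈ t, m θ • θ = 0 → ∀ θ ∈ t, m θ = 0)) ∧
    ((∀ t : Finset (Fin n → ℤ), ↑t ⊆ S → ∀ m : (Fin n → ℤ) → ℤ,
        ∑ θ ∈ t, m θ • θ = 0 → ∀ θ ∈ t, m θ = 0) ↔
      (0 : Fin n → ℤ) ∉ SumGE S 1) :=
  stmt4_general n M hskew β hTLS S hS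
end
end

section
/- In the generalized Cartan matrix setting: (a) s_{β_1}s_{β_2}⋯s_{β_{j−1}}(β_j) = α_{i_j} for every j ∈ [1,n]; and (b) S(λ,β) = {θ^{(j)} : j ∈ J}, where for j ∈ J the vector θ^{(j)} ∈ ℤ^n is defined by θ^{(j)}_j = −1, θ^{(j)}_{j⁺} = −1, θ^{(j)}_k = −a_{i_k,i_j} for j < k < j⁺, and θ^{(j)}_k = 0 for all other k ∈ [1,n]. -/
open Finset Matrix

noncomputable section

/-- The Cartan number `a_{b,ξ} = 2⟨b,ξ⟩/⟨b,b⟩`. -/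
def cartan {V : Type*} [AddCommGroup V] [Module ℂ V]
    (B : V →ₗ[ℂ] V →ₗ[ℂ] ℂ) (b ξ : V) : ℂ :=
  2 * B b ξ / B b b

/-- The reflection `s_b(ξ) = ξ - a_{b,ξ} b`. -/
def sRefl {V : Type*} [AddCommGroup V] [Module ℂ V]
    (B : V →ₗ[ℂ] V →ₗ[ℂ] ℂ) (b ξ : V) : V :=
  ξ - cartan B b ξ • b

/-- `reflL B g m = s_{g 0} ∘ s_{g 1} ∘ ⋯ ∘ s_{g (m-1)}`. -/
def reflL {V : Type*} [AddCommGroup V] [Module ℂ V]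
    (B : V →ₗ[ℂ] V →ₗ[ℂ] ℂ) (g : ℕ → V) : ℕ → V → V
  | 0, ξ => ξ
  | m + 1, ξ => reflL B g m (sRefl B (g m) ξ)

/-- `reflR B g m = s_{g (m-1)} ∘ ⋯ ∘ s_{g 1} ∘ s_{g 0}`. -/
def reflR {V : Type*} [AddCommGroup V] [Module ℂ V]
    (B : V →ₗ[ℂ] V →ₗ[ℂ] ℂ) (g : ℕ → V) : ℕ → V → V
  | 0, ξ => ξ
  | m + 1, ξ => sRefl B (g m) (reflR B g m ξ)

/-- Extension of a `Fin n`-indexed family to `ℕ` by zero. -/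
def gext {n : ℕ} {V : Type*} [AddCommGroup V] (v : Fin n → V) : ℕ → V :=
  fun t => if h : t < n then v ⟨t, h⟩ else 0

/-- `γ_j = s_{β_1} s_{β_2} ⋯ s_{β_{j-1}} (β_j)`. -/
def gam {n : ℕ} {V : Type*} [AddCommGroup V] [Module ℂ V]
    (B : V →ₗ[ℂ] V →ₗ[ℂ] ℂ) (β : Fin n → V) (j : Fin n) : V :=
  reflL B (gext β) j.val (β j)

/-- The Poisson coefficient matrix `λ` of a T-action datum: `λ_{jk} = -⟨β_j, β_k⟩` for
`j < k`, `⟨β_j, β_k⟩` for `j > k`, and `0` on the diagonal. -/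
def lam {n : ℕ} {V : Type*} [AddCommGroup V] [Module ℂ V]
    (B : V →ₗ[ℂ] V →ₗ[ℂ] ℂ) (β : Fin n → V) : Matrix (Fin n) (Fin n) ℂ :=
  Matrix.of fun j k =>
    if j < k then -(B (β j) (β k)) else if k < j then B (β j) (β k) else 0

/-- The upper triangular matrix `Q` with `Q_{jj} = 1` and `Q_{jk} = a_{γ_j, γ_k}` for
`j < k`. -/
def Qmat {n : ℕ} {V : Type*} [AddCommGroup V] [Module ℂ V]
    (B : V →ₗ[ℂ] V →ₗ[ℂ] ℂ) (γ : Fin n → V) : Matrix (Fin n) (Fin n) ℂ :=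
  Matrix.of fun j k => if j = k then 1 else if j < k then cartan B (γ j) (γ k) else 0

open scoped Classical in
/-- The set `{k ∈ [j+1, n] : γ_k = γ_j}`, whose minimum (when it exists) is `j⁺`. -/
def plusSet {n : ℕ} {V : Type*} (γ : Fin n → V) (j : Fin n) : Finset (Fin n) :=
  Finset.univ.filter (fun k => j < k ∧ γ k = γ j)

/-- `e_{j⁺} ∈ ℂⁿ`, with the convention `e_{+∞} = 0`. -/
def eplus {n : ℕ} {V : Type*} (γ : Fin n → V) (j : Fin n) : Fin n → ℂ :=
  if h : (plusSet γ j).Nonempty then Pi.single ((plusSet γ j).min' h) 1 else 0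

/-- `θ^{(j)} = Q (e_j - e_{j⁺}) ∈ ℂⁿ`. -/
def thetaC {n : ℕ} {V : Type*} [AddCommGroup V] [Module ℂ V]
    (B : V →ₗ[ℂ] V →ₗ[ℂ] ℂ) (β : Fin n → V) (j : Fin n) : Fin n → ℂ :=
  (Qmat B (gam B β)).mulVec ((Pi.single j 1 : Fin n → ℂ) - eplus (gam B β) j)

/-- The linear map `β : ℂⁿ → V`, `w ↦ ∑ w_j β_j`, as a bundled linear map. -/
def betaLin {n : ℕ} {V : Type*} [AddCommGroup V] [Module ℂ V]
    (β : Fin n → V) : (Fin n → ℂ) →ₗ[ℂ] V where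
  toFun w := ∑ j, w j • β j
  map_add' x y := by simp [add_smul, Finset.sum_add_distrib]
  map_smul' a x := by simp [Finset.smul_sum, smul_smul]


/-! In the code everything is indexed from `0`: `g m = α_{i_m}`, `W_m = s_{g 0} ⋯ s_{g (m-1)}`
(`reflL`) and `β_m = W_m (g m)`. Since `W_m` is an isometry, `s_{β_m} = W_m s_{g m} W_m⁻¹`, so
`s_{β_0} ⋯ s_{β_{m-1}} = s_{g (m-1)} ⋯ s_{g 0} = W_m⁻¹`, which is (a).

For (b), let `F_m = ∑_{k<m} θ_k β_k` and `G_m = W_m⁻¹ F_m`. Then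
`G_{m+1} = G_m - (θ_m + a_{g m, G_m}) g m`, and when `β(θ) = 0`,
`(λθ)_m = ⟨g m, g m⟩ (θ_m + a_{g m, G_m})`. So for `J_θ = {j, j'}` the conditions defining `W(λ,β)`
say that `G` vanishes up to `j`, equals `g j` on `(j, j']` and vanishes again from `j' + 1` to
`G_n = W_n⁻¹ β(θ) = 0`. The step at `j'` forces `g j' = g j`, and the stationarity of `G`
elsewhere reads `θ_m = -a_{i_m, i_j}` for `j < m < j'` and `θ_m = 0` otherwise; as `a_{ii} = 2`,
the bound `θ_m ≥ -1` rules out `i_m = i_j` for `j < m < j'`. -/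

section

variable {V : Type*} [AddCommGroup V] [Module ℂ V] {B : V →ₗ[ℂ] V →ₗ[ℂ] ℂ}

lemma cartan_add_right (b x y : V) : cartan B b (x + y) = cartan B b x + cartan B b y := by
  simp only [cartan, map_add]
  ring

lemma cartan_smul_right (b : V) (c : ℂ) (x : V) : cartan B b (c • x) = c * cartan B b x := by
  simp only [cartan, map_smul, smul_eq_mul]
  ring

@[simp]
lemma cartan_zero_right (b : V) : cartan B b 0 = 0 := by
  simp [cartan]

lemma cartan_self {b : V} (hb : B b b ≠ 0) : cartan B b b = 2 := by
  rw [cartan, mul_div_assoc, div_self hb, mul_one]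

lemma sRefl_self {b : V} (hb : B b b ≠ 0) : sRefl B b b = -b := by
  rw [sRefl, cartan_self hb]
  module

lemma sRefl_sRefl (b x : V) : sRefl B b (sRefl B b x) = x := by
  by_cases hb : B b b = 0
  · simp [sRefl, cartan, hb]
  · have h : cartan B b (sRefl B b x) = -cartan B b x := by
      simp only [sRefl, cartan, map_sub, map_smul, smul_eq_mul]
      field_simp
      ring
    rw [sRefl, h, sRefl]
    module

structure IsIsometry (B : V →ₗ[ℂ] V →ₗ[ℂ] ℂ) (f : V → V) : Prop extends IsLinearMap ℂ f where
  map_form : ∀ x y, B (f x) (f y) = B x y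

namespace IsIsometry

variable {f f' : V → V}

lemma id : IsIsometry B fun x => x :=
  ⟨⟨fun _ _ => rfl, fun _ _ => rfl⟩, fun _ _ => rfl⟩

lemma comp (hf : IsIsometry B f) (hf' : IsIsometry B f') : IsIsometry B (f ∘ f') :=
  ⟨⟨fun x y => by simp [hf'.map_add, hf.map_add], fun c x => by simp [hf'.map_smul, hf.map_smul]⟩,
    fun x y => by simp [hf.map_form, hf'.map_form]⟩

lemma cartan_map (hf : IsIsometry B f) (b x : V) : cartan B (f b) (f x) = cartan B b x := by
  simp only [cartan, hf.map_form]

lemma map_sRefl (hf : IsIsometry B f) (b x : V) : f (sRefl B b x) = sRefl B (f b) (f x) := by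
  rw [sRefl, hf.toIsLinearMap.map_sub, hf.map_smul, sRefl, hf.cartan_map]

lemma sRefl (hB : ∀ x y, B x y = B y x) (b : V) : IsIsometry B (sRefl B b) := by
  refine ⟨⟨fun x y => ?_, fun c x => ?_⟩, fun x y => ?_⟩
  · simp only [_root_.sRefl, cartan_add_right, add_smul]
    abel
  · simp only [_root_.sRefl, cartan_smul_right, mul_smul, smul_sub]
  · by_cases hb : B b b = 0
    · simp [_root_.sRefl, cartan, hb]
    · simp only [_root_.sRefl, cartan, map_sub, map_smul, smul_eq_mul, LinearMap.sub_apply,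
        LinearMap.smul_apply]
      field_simp
      rw [hB x b]
      ring

end IsIsometry

lemma isIsometry_reflL (hB : ∀ x y, B x y = B y x) (g : ℕ → V) :
    ∀ m, IsIsometry B (reflL B g m)
  | 0 => IsIsometry.id
  | m + 1 => (isIsometry_reflL hB g m).comp (IsIsometry.sRefl hB (g m))

lemma isIsometry_reflR (hB : ∀ x y, B x y = B y x) (g : ℕ → V) :
    ∀ m, IsIsometry B (reflR B g m)
  | 0 => IsIsometry.id
  | m + 1 => (IsIsometry.sRefl hB (g m)).comp (isIsometry_reflR hB g m)

lemma reflR_reflL (g : ℕ → V) : ∀ m x, reflR B g m (reflL B g m x) = x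
  | 0, _ => rfl
  | m + 1, x => by
    rw [reflR, reflL, reflR_reflL g m, sRefl_sRefl]

lemma reflL_reflR (g : ℕ → V) : ∀ m x, reflL B g m (reflR B g m x) = x
  | 0, _ => rfl
  | m + 1, x => by
    rw [reflR, reflL, sRefl_sRefl, reflL_reflR g m]

variable {n : ℕ}

@[simp]
lemma gext_val {W : Type*} [AddCommGroup W] (v : Fin n → W) (j : Fin n) : gext v j = v j := by
  simp [gext]

section ReflectionWord

variable {g : ℕ → V} {β : Fin n → V}

lemma reflL_gext_eq_reflR (hB : ∀ x y, B x y = B y x)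
    (hβ : ∀ j : Fin n, β j = reflL B g j (g j)) : ∀ m ≤ n, reflL B (gext β) m = reflR B g m
  | 0, _ => rfl
  | m + 1, hm => by
    funext ξ
    have hβm : β ⟨m, hm⟩ = reflL B g m (g m) := hβ ⟨m, hm⟩
    rw [reflL, reflL_gext_eq_reflR hB hβ m (by omega), reflR,
      (isIsometry_reflR hB g m).map_sRefl, show gext β m = β ⟨m, hm⟩ from gext_val β ⟨m, hm⟩,
      hβm, reflR_reflL]

lemma gam_eq (hB : ∀ x y, B x y = B y x) (hβ : ∀ j : Fin n, β j = reflL B g j (g j))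
    (j : Fin n) : gam B β j = g j := by
  rw [gam, reflL_gext_eq_reflR hB hβ j j.isLt.le, hβ, reflR_reflL]

end ReflectionWord

section PartialSum

variable (β : Fin n → V) (w : Fin n → ℂ)

def partialSum (m : ℕ) : V := ∑ k ∈ univ.filter (fun k : Fin n => (k : ℕ) < m), w k • β k

@[simp]
lemma partialSum_zero : partialSum β w 0 = 0 := by
  simp [partialSum]

lemma partialSum_succ (m : Fin n) :
    partialSum β w (m + 1) = partialSum β w m + w m • β m := by
  have hfilter : univ.filter (fun k : Fin n => (k : ℕ) < m + 1) =
      insert m (univ.filter fun k : Fin n => (k : ℕ) < m) := by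
    ext k
    simp only [Finset.mem_filter, Finset.mem_univ, true_and, Finset.mem_insert, Fin.ext_iff]
    omega
  rw [partialSum, hfilter, Finset.sum_insert (by simp), add_comm, partialSum]

lemma partialSum_length : partialSum β w n = bmap β w := by
  simp [partialSum, bmap]

lemma lam_mulVec_apply (m : Fin n) :
    (lam B β *ᵥ w) m =
      2 * B (β m) (partialSum β w m) + w m * B (β m) (β m) - B (β m) (bmap β w) := by
  have hdiag : w m * B (β m) (β m) = ∑ k : Fin n, if k = m then w k * B (β m) (β k) else 0 := by
    simp
  simp only [partialSum, bmap, map_sum, map_smul, smul_eq_mul, Finset.sum_filter, hdiag,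
    Finset.mul_sum, ← Finset.sum_add_distrib, ← Finset.sum_sub_distrib, mulVec, dotProduct]
  refine Finset.sum_congr rfl fun k _ => ?_
  rcases lt_trichotomy k m with hkm | rfl | hmk
  · simp only [lam, of_apply, hkm.not_gt, ↓reduceIte, hkm, Fin.val_fin_lt, map_smul, smul_eq_mul,
      hkm.ne, add_zero]
    ring
  · simp [lam]
  · simp only [lam, of_apply, hmk, ↓reduceIte, neg_mul, Fin.val_fin_lt, hmk.not_gt, map_zero,
      mul_zero, hmk.ne', add_zero, zero_sub]
    ring

end PartialSum

section UntwistedSum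

variable (B) (g : ℕ → V) (β : Fin n → V) (w : Fin n → ℂ)

def untwistedSum (m : ℕ) : V := reflR B g m (partialSum β w m)

variable {B g β w}

@[simp]
lemma untwistedSum_zero : untwistedSum B g β w 0 = 0 :=
  partialSum_zero β w

lemma bmap_eq_zero_iff (hB : ∀ x y, B x y = B y x) :
    bmap β w = 0 ↔ untwistedSum B g β w n = 0 := by
  have hR := isIsometry_reflR hB g n
  rw [untwistedSum, partialSum_length]
  refine ⟨fun h => by rw [h, hR.map_zero], fun h => ?_⟩
  rw [← reflL_reflR g n (bmap β w), h, (isIsometry_reflL hB g n).map_zero]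

lemma untwistedSum_succ (hB : ∀ x y, B x y = B y x)
    (hβ : ∀ j : Fin n, β j = reflL B g j (g j)) (m : Fin n) (hg : B (g m) (g m) ≠ 0) :
    untwistedSum B g β w (m + 1) =
      untwistedSum B g β w m - (w m + cartan B (g m) (untwistedSum B g β w m)) • g m := by
  have hR := isIsometry_reflR hB g m
  have hs := IsIsometry.sRefl hB (g m)
  rw [untwistedSum, partialSum_succ, reflR, hR.map_add, hR.map_smul, hβ, reflR_reflL,
    hs.map_add, hs.map_smul, sRefl_self hg, sRefl, ← untwistedSum]
  module

lemma lam_mulVec_apply_eq (hB : ∀ x y, B x y = B y x)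
    (hβ : ∀ j : Fin n, β j = reflL B g j (g j)) (m : Fin n) (hg : B (g m) (g m) ≠ 0) :
    (lam B β *ᵥ w) m = B (g m) (g m) * (w m + cartan B (g m) (untwistedSum B g β w m)) -
      B (β m) (bmap β w) := by
  have hL := isIsometry_reflL hB g m
  have hF : partialSum β w m = reflL B g m (untwistedSum B g β w m) :=
    (reflL_reflR g m _).symm
  rw [lam_mulVec_apply, hF, hβ, hL.map_form, hL.map_form, cartan]
  field_simp
  ring

end UntwistedSum

lemma Nat.eq_of_forall_succ_eq {α : Type*} {f : ℕ → α} {a b : ℕ} (hab : a ≤ b)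
    (h : ∀ k, a ≤ k → k < b → f (k + 1) = f k) : f b = f a := by
  induction b, hab using Nat.le_induction with
  | base => rfl
  | succ b hab ih => rw [h b hab (by omega), ih fun k hk hkb => h k hk (by omega)]

def smoothableProfile {M : Type*} [Zero M] (g : ℕ → M) (j jp m : ℕ) : M :=
  if j < m ∧ m ≤ jp then g j else 0

lemma smoothableProfile_succ {M : Type*} [Zero M] (g : ℕ → M) {j jp k : ℕ} (hkj : k ≠ j)
    (hkjp : k ≠ jp) : smoothableProfile g j jp (k + 1) = smoothableProfile g j jp k := by
  simp only [smoothableProfile]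
  split_ifs <;> first | rfl | omega

section RootString

variable {g : ℕ → V} {w : Fin n → ℂ} {G : ℕ → V} {j jp : Fin n}

lemma add_cartan_smoothableProfile_eq_zero_iff {k : Fin n} (hkjp : k ≠ jp) :
    w k + cartan B (g k) (smoothableProfile g j jp k) = 0 ↔
      w k = if j < k ∧ k < jp then -cartan B (g k) (g j) else 0 := by
  have hiff : (j : ℕ) < k ∧ (k : ℕ) ≤ jp ↔ j < k ∧ k < jp := by omega
  simp only [smoothableProfile, hiff]
  split_ifs
  · exact add_eq_zero_iff_eq_neg
  · simp

lemma eq_smoothableProfile_of_add_cartan_eq_zero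
    (hGsucc : ∀ k : Fin n, G (k + 1) = G k - (w k + cartan B (g k) (G k)) • g k)
    (hG0 : G 0 = 0) (hGn : G n = 0) (hwj : w j = -1) (hj : j < jp)
    (hc : ∀ k, k ≠ j → k ≠ jp → w k + cartan B (g k) (G k) = 0) :
    ∀ m ≤ n, G m = smoothableProfile g j jp m := by
  have hconst : ∀ k (hk : k < n), k ≠ j → k ≠ jp → G (k + 1) = G k := by
    intro k hk hkj hkjp
    have h := hGsucc ⟨k, hk⟩
    rwa [hc ⟨k, hk⟩ (by rintro rfl; exact hkj rfl) (by rintro rfl; exact hkjp rfl), zero_smul,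
      sub_zero] at h
  have hGj : G j = 0 := hG0 ▸ Nat.eq_of_forall_succ_eq (Nat.zero_le j) fun k _ hk =>
    hconst k (by omega) (by omega) (by omega)
  have hGj1 : G (j + 1) = g j := by
    rw [hGsucc j, hGj, hwj, cartan_zero_right]
    module
  intro m hm
  unfold smoothableProfile
  split_ifs with h
  · rw [Nat.eq_of_forall_succ_eq h.1 fun k hk hkm => hconst k (by omega) (by omega) (by omega),
      hGj1]
  · by_cases hmj : m ≤ j
    · rw [Nat.eq_of_forall_succ_eq (Nat.zero_le m) fun k _ hk =>
        hconst k (by omega) (by omega) (by omega), hG0]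
    · rw [← hGn, Nat.eq_of_forall_succ_eq hm fun k hk hkn =>
        hconst k hkn (by omega) (by omega)]

lemma endpoint_zero_and_stationary_iff
    (hGsucc : ∀ k : Fin n, G (k + 1) = G k - (w k + cartan B (g k) (G k)) • g k)
    (hG0 : G 0 = 0) (hj : j < jp) (hwj : w j = -1) (hwjp : w jp = -1)
    (hg : B (g jp) (g jp) ≠ 0) :
    (G n = 0 ∧ ∀ k, k ≠ j → k ≠ jp → w k + cartan B (g k) (G k) = 0) ↔
      (g jp = g j ∧
        ∀ k, k ≠ j → k ≠ jp → w k = if j < k ∧ k < jp then -cartan B (g k) (g j) else 0) := by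
  have hPj : smoothableProfile g j jp j = 0 := if_neg fun h => h.1.false
  have hPj1 : smoothableProfile g j jp (j + 1) = g j := if_pos ⟨Nat.lt_succ_self _, hj⟩
  have hPjp : smoothableProfile g j jp jp = g j := if_pos ⟨hj, le_rfl⟩
  have hPjp1 : smoothableProfile g j jp (jp + 1) = 0 := if_neg fun h => by omega
  constructor
  · rintro ⟨hGn, hc⟩
    have hP := eq_smoothableProfile_of_add_cartan_eq_zero hGsucc hG0 hGn hwj hj hc
    refine ⟨?_, fun k hkj hkjp => (add_cartan_smoothableProfile_eq_zero_iff hkjp).1 ?_⟩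
    · have h := hGsucc jp
      rw [hP _ jp.isLt, hP _ jp.isLt.le, hwjp, hPjp, hPjp1] at h
      have hgj : g j = (cartan B (g jp) (g j) - 1) • g jp := by
        linear_combination (norm := module) -h
      have hc2 : cartan B (g jp) (g j) = 2 := by
        have h2 := congrArg (cartan B (g jp)) hgj
        rw [cartan_smul_right, cartan_self hg] at h2
        linear_combination -h2
      rw [hgj, hc2]
      norm_num
    · rw [← hP k k.isLt.le]
      exact hc k hkj hkjp
  · rintro ⟨hgjp, hw⟩
    have hstep : ∀ k : Fin n, G k = smoothableProfile g j jp k →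
        G (k + 1) = smoothableProfile g j jp (k + 1) := by
      intro k hk
      rw [hGsucc, hk]
      rcases eq_or_ne k j with rfl | hkj
      · rw [hPj, hPj1, hwj, cartan_zero_right]
        module
      rcases eq_or_ne k jp with rfl | hkjp
      · rw [hPjp, hPjp1, hwjp, hgjp, cartan_self (hgjp ▸ hg)]
        module
      rw [(add_cartan_smoothableProfile_eq_zero_iff hkjp).2 (hw k hkj hkjp), zero_smul, sub_zero,
        smoothableProfile_succ g (Fin.val_ne_iff.2 hkj) (Fin.val_ne_iff.2 hkjp)]
    have hP : ∀ m ≤ n, G m = smoothableProfile g j jp m := by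
      intro m hm
      induction m with
      | zero => rw [hG0, smoothableProfile, if_neg fun h => h.2.not_gt (by omega)]
      | succ m ih => exact hstep ⟨m, by omega⟩ (ih (by omega))
    refine ⟨?_, fun k hkj hkjp => ?_⟩
    · rw [hP n le_rfl, smoothableProfile, if_neg (by omega)]
    · rw [hP k k.isLt.le]
      exact (add_cartan_smoothableProfile_eq_zero_iff hkjp).2 (hw k hkj hkjp)

end RootString

lemma bmap_eq_zero_and_lam_mulVec_eq_zero_iff {g : ℕ → V} {β : Fin n → V} {w : Fin n → ℂ}
    {j jp : Fin n} (hB : ∀ x y, B x y = B y x) (hβ : ∀ j : Fin n, β j = reflL B g j (g j))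
    (hg : ∀ k : Fin n, B (g k) (g k) ≠ 0) (hj : j < jp) (hwj : w j = -1) (hwjp : w jp = -1) :
    (bmap β w = 0 ∧ ∀ k, k ≠ j → k ≠ jp → (lam B β *ᵥ w) k = 0) ↔
      (g jp = g j ∧
        ∀ k, k ≠ j → k ≠ jp → w k = if j < k ∧ k < jp then -cartan B (g k) (g j) else 0) := by
  rw [← endpoint_zero_and_stationary_iff (fun k => untwistedSum_succ hB hβ k (hg k))
    untwistedSum_zero hj hwj hwjp (hg jp), bmap_eq_zero_iff hB]
  refine and_congr_right fun hGn => ?_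
  simp only [lam_mulVec_apply_eq hB hβ _ (hg _), (bmap_eq_zero_iff hB).2 hGn, map_zero, sub_zero,
    mul_eq_zero, hg, false_or]

lemma mem_Sset_iff {M : Matrix (Fin n) (Fin n) ℂ} {β : Fin n → V} {θ : Fin n → ℤ} :
    θ ∈ Sset M β ↔ ∃ j jp, j < jp ∧ θ j = -1 ∧ θ jp = -1 ∧ (∀ k, k ≠ j → k ≠ jp → -1 < θ k) ∧
      bmap β (cvec θ) = 0 ∧ ∀ k, k ≠ j → k ≠ jp → (M *ᵥ cvec θ) k = 0 := by
  have hJ : ∀ j jp : Fin n, Jset θ = {j, jp} ↔ ∀ k, θ k = -1 ↔ k = j ∨ k = jp := by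
    simp [Finset.ext_iff, Jset]
  constructor
  · rintro ⟨⟨hge, hM, hb⟩, hcard⟩
    obtain ⟨j, jp, hj, hJθ⟩ : ∃ j jp, j < jp ∧ Jset θ = {j, jp} := by
      obtain ⟨a, b, hab, hJab⟩ := Finset.card_eq_two.1 hcard
      rcases hab.lt_or_gt with h | h
      · exact ⟨a, b, h, hJab⟩
      · exact ⟨b, a, h, hJab.trans (Finset.pair_comm a b)⟩
    have hmem := (hJ j jp).1 hJθ
    refine ⟨j, jp, hj, (hmem j).2 (.inl rfl), (hmem jp).2 (.inr rfl),
      fun k hkj hkjp => (hge k).lt_of_ne fun h => ?_, hb,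
      fun k hkj hkjp => hM k (by simp [hJθ, hkj, hkjp])⟩
    rcases (hmem k).1 h.symm with h' | h' <;> contradiction
  · rintro ⟨j, jp, hj, hθj, hθjp, hgt, hb, hM⟩
    have hJθ : Jset θ = {j, jp} := by
      refine (hJ j jp).2 fun k => ⟨fun hk => ?_, by rintro (rfl | rfl) <;> assumption⟩
      by_contra h
      exact (hgt k (fun h' => h (.inl h')) fun h' => h (.inr h')).ne' hk
    refine ⟨⟨fun k => ?_, fun k hk => hM k ?_ ?_, hb⟩, by rw [hJθ, Finset.card_pair hj.ne]⟩
    · by_cases h : k = j ∨ k = jp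
      · rcases h with rfl | rfl <;> simp [*]
      · exact (hgt k (fun h' => h (.inl h')) fun h' => h (.inr h')).le
    all_goals rintro rfl; simp [hJθ] at hk

section CartanMatrix

variable {r : ℕ} {A : Matrix (Fin r) (Fin r) ℤ} {d : Fin r → ℤ} {α : Fin r → V}

/-- The weight `θ^{(j)}`, with `jp` in the role of `j⁺`. -/
def smoothableWeight (A : Matrix (Fin r) (Fin r) ℤ) (iseq : Fin n → Fin r) (j jp : Fin n) :
    Fin n → ℤ :=
  fun k => if k = j ∨ k = jp then -1 else if j < k ∧ k < jp then -(A (iseq k) (iseq j)) else 0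

lemma smoothableWeight_iff (hA2 : ∀ i, A i i = 2) (hAneg : ∀ i j, i ≠ j → A i j ≤ 0)
    {iseq : Fin n → Fin r} {θ : Fin n → ℤ} {j jp : Fin n} (hj : j < jp) :
    (θ j = -1 ∧ θ jp = -1 ∧ (∀ k, k ≠ j → k ≠ jp → -1 < θ k) ∧ iseq jp = iseq j ∧
      ∀ k, k ≠ j → k ≠ jp → θ k = if j < k ∧ k < jp then -A (iseq k) (iseq j) else 0) ↔
    (iseq jp = iseq j ∧ (∀ k, j < k → k < jp → iseq k ≠ iseq j) ∧
      θ = smoothableWeight A iseq j jp) := by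
  constructor
  · rintro ⟨hθj, hθjp, hgt, hiseq, hθ⟩
    refine ⟨hiseq, fun k hjk hkjp hk => ?_, funext fun k => ?_⟩
    · have h := hgt k hjk.ne' hkjp.ne
      rw [hθ k hjk.ne' hkjp.ne, if_pos ⟨hjk, hkjp⟩, hk, hA2] at h
      omega
    · unfold smoothableWeight
      split_ifs with h
      · rcases h with rfl | rfl <;> assumption
      all_goals
        rw [hθ k (fun h' => h (.inl h')) fun h' => h (.inr h')]
        simp [*]
  · rintro ⟨hiseq, hne, rfl⟩
    refine ⟨by simp [smoothableWeight], by simp [smoothableWeight], fun k hkj hkjp => ?_, hiseq,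
      fun k hkj hkjp => by simp [smoothableWeight, hkj, hkjp]⟩
    simp only [smoothableWeight, hkj, hkjp, or_self, if_false]
    split_ifs with h
    · have := hAneg _ _ (hne k h.1 h.2)
      omega
    · omega

lemma cartan_eq_of_form_eq (hA2 : ∀ i, A i i = 2) (hd : ∀ i, 0 < d i)
    (hBα : ∀ i j, B (α i) (α j) = ((d i * A i j : ℤ) : ℂ)) (i j : Fin r) :
    cartan B (α i) (α j) = A i j := by
  have hdi : (d i : ℂ) ≠ 0 := by exact_mod_cast (hd i).ne'
  rw [cartan, hBα, hBα, hA2]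
  push_cast
  field_simp

lemma form_self_ne_zero (hA2 : ∀ i, A i i = 2) (hd : ∀ i, 0 < d i)
    (hBα : ∀ i j, B (α i) (α j) = ((d i * A i j : ℤ) : ℂ)) (i : Fin r) :
    B (α i) (α i) ≠ 0 := by
  rw [hBα, hA2]
  exact_mod_cast (mul_pos (hd i) two_pos).ne'

lemma bmap_eq_zero_and_lam_mulVec_eq_zero_iff_of_cartanMatrix (hB : ∀ x y, B x y = B y x)
    (hA2 : ∀ i, A i i = 2) (hd : ∀ i, 0 < d i)
    (hBα : ∀ i j, B (α i) (α j) = ((d i * A i j : ℤ) : ℂ)) (hα : LinearIndependent ℂ α)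
    {iseq : Fin n → Fin r} {β : Fin n → V}
    (hβ : ∀ j : Fin n, β j = reflL B (gext fun t : Fin n => α (iseq t)) j (α (iseq j)))
    {θ : Fin n → ℤ} {j jp : Fin n} (hj : j < jp) (hθj : θ j = -1) (hθjp : θ jp = -1) :
    (bmap β (cvec θ) = 0 ∧ ∀ k, k ≠ j → k ≠ jp → (lam B β *ᵥ cvec θ) k = 0) ↔
      (iseq jp = iseq j ∧
        ∀ k, k ≠ j → k ≠ jp → θ k = if j < k ∧ k < jp then -A (iseq k) (iseq j) else 0) := by
  rw [bmap_eq_zero_and_lam_mulVec_eq_zero_iff (g := gext fun t : Fin n => α (iseq t)) hB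
    (by simpa using hβ)
    (by simpa using fun k => form_self_ne_zero hA2 hd hBα (iseq k)) hj (by simp [cvec, hθj])
    (by simp [cvec, hθjp])]
  simp only [gext_val, hα.injective.eq_iff, cartan_eq_of_form_eq hA2 hd hBα, cvec]
  refine and_congr_right fun _ => forall₃_congr fun k _ _ => ?_
  split_ifs <;> norm_cast

end CartanMatrix

end

theorem stmt7_general (r n : ℕ)
    (A : Matrix (Fin r) (Fin r) ℤ) (hA2 : ∀ i, A i i = 2)
    (hAneg : ∀ i j, i ≠ j → A i j ≤ 0)
    (d : Fin r → ℤ) (hd : ∀ i, 0 < d i)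
    {V : Type*} [AddCommGroup V] [Module ℂ V]
    (B : V →ₗ[ℂ] V →ₗ[ℂ] ℂ) (hBsymm : ∀ x y, B x y = B y x)
    (α : Fin r → V) (hα : LinearIndependent ℂ α)
    (hBα : ∀ i j, B (α i) (α j) = ((d i * A i j : ℤ) : ℂ))
    (iseq : Fin n → Fin r) (β : Fin n → V)
    (hβ : ∀ j : Fin n,
      β j = reflL B (gext (fun t : Fin n => α (iseq t))) j.val (α (iseq j))) :
    (∀ j : Fin n, gam B β j = α (iseq j)) ∧
    Sset (lam B β) β = {θ : Fin n → ℤ | ∃ j jp : Fin n, j < jp ∧ iseq jp = iseq j ∧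
      (∀ k, j < k → k < jp → iseq k ≠ iseq j) ∧
      θ = fun k => if k = j ∨ k = jp then -1
        else if j < k ∧ k < jp then -(A (iseq k) (iseq j)) else 0} := by
  refine ⟨fun j => ?_, Set.ext fun θ => ?_⟩
  · rw [gam_eq (g := gext fun t : Fin n => α (iseq t)) hBsymm (by simpa using hβ), gext_val]
  rw [mem_Sset_iff]
  refine exists₂_congr fun j jp => and_congr_right fun hj => ?_
  refine Iff.trans ?_ (smoothableWeight_iff hA2 hAneg hj)
  refine and_congr_right fun hθj => and_congr_right fun hθjp => and_congr_right fun _ => ?_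
  exact bmap_eq_zero_and_lam_mulVec_eq_zero_iff_of_cartanMatrix hBsymm hA2 hd hBα hα hβ hj hθj
    hθjp

theorem stmt7 (r n : ℕ) (hr : 0 < r) (hn : 0 < n)
    (A : Matrix (Fin r) (Fin r) ℤ) (hA2 : ∀ i, A i i = 2)
    (hAneg : ∀ i j, i ≠ j → A i j ≤ 0)
    (d : Fin r → ℤ) (hd : ∀ i, 0 < d i)
    (hdsym : ∀ i j, d i * A i j = d j * A j i)
    {V : Type*} [AddCommGroup V] [Module ℂ V]
    (B : V →ₗ[ℂ] V →ₗ[ℂ] ℂ) (hBsymm : ∀ x y, B x y = B y x)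
    (α : Fin r → V) (hα : LinearIndependent ℂ α)
    (hBα : ∀ i j, B (α i) (α j) = ((d i * A i j : ℤ) : ℂ))
    (iseq : Fin n → Fin r) (β : Fin n → V)
    (hβ : ∀ j : Fin n,
      β j = reflL B (gext (fun t : Fin n => α (iseq t))) j.val (α (iseq j))) :
    (∀ j : Fin n, gam B β j = α (iseq j)) ∧
    Sset (lam B β) β = {θ : Fin n → ℤ | ∃ j jp : Fin n, j < jp ∧ iseq jp = iseq j ∧
      (∀ k, j < k → k < jp → iseq k ≠ iseq j) ∧
      θ = fun k => if k = j ∨ k = jp then -1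
        else if j < k ∧ k < jp then -(A (iseq k) (iseq j)) else 0} :=
  stmt7_general r n A hA2 hAneg d hd B hBsymm α hα hBα iseq β hβ
end
end

section
/- Suppose the pair (λ,β) is T-log-symplectic and let S ⊆ S(λ,β) be such that every element of S is negatively bordered. Then: (i) no element of S_{≥1} has all entries ≥ −1 and |J_w| ≤ 1 (in particular S satisfies condition (W1): no element of S_{≥2} has all entries ≥ −1 and |J_w| ≤ 1); and (ii) every w ∈ S_{≥1} with all entries ≥ −1 and |J_w| ≤ 2 is negatively bordered. -/
open Finset Matrix

noncomputable section

/-- Auxiliary property: the sum-closure of negatively-bordered vectors. -/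
def Pprop {n : ℕ} (w : Fin n → ℤ) : Prop :=
  ∃ j k : Fin n, j < k ∧ w j ≤ -1 ∧ w k ≤ -1 ∧ (∀ i, i < j → w i = 0) ∧
    (∀ i, k < i → w i = 0)

lemma negBordered_pprop {n : ℕ} {w : Fin n → ℤ} (h : NegBordered w) : Pprop w := by
  obtain ⟨j, k, hjk, hj, hk, hl, hr, _⟩ := h
  exact ⟨j, k, hjk, by omega, by omega, hl, hr⟩

lemma pprop_add {n : ℕ} {w1 w2 : Fin n → ℤ}
    (h1 : Pprop w1) (h2 : Pprop w2) : Pprop (w1 + w2) := by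
  obtain ⟨j1, k1, hjk1, hj1, hk1, hl1, hr1⟩ := h1
  obtain ⟨j2, k2, hjk2, hj2, hk2, hl2, hr2⟩ := h2
  have keyL : ∀ (w : Fin n → ℤ) (j m : Fin n), m ≤ j → w j ≤ -1 →
      (∀ i, i < j → w i = 0) → w m ≤ 0 := by
    intro w j m hm hj hl
    rcases lt_or_eq_of_le hm with h | h
    · exact (hl m h).le
    · rw [h]; omega
  have keyR : ∀ (w : Fin n → ℤ) (k m : Fin n), k ≤ m → w k ≤ -1 →
      (∀ i, k < i → w i = 0) → w m ≤ 0 := by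
    intro w k m hm hk hr
    rcases lt_or_eq_of_le hm with h | h
    · exact (hr m h).le
    · rw [← h]; omega
  refine ⟨min j1 j2, max k1 k2, ?_, ?_, ?_, ?_, ?_⟩
  · exact lt_of_le_of_lt (min_le_left _ _) (lt_of_lt_of_le hjk1 (le_max_left _ _))
  · have a1 : w1 (min j1 j2) ≤ 0 := keyL w1 j1 _ (min_le_left _ _) hj1 hl1
    have a2 : w2 (min j1 j2) ≤ 0 := keyL w2 j2 _ (min_le_right _ _) hj2 hl2
    have a3 : w1 (min j1 j2) ≤ -1 ∨ w2 (min j1 j2) ≤ -1 := by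
      rcases min_choice j1 j2 with h | h
      · left; rw [h]; exact hj1
      · right; rw [h]; exact hj2
    simp only [Pi.add_apply]
    omega
  · have a1 : w1 (max k1 k2) ≤ 0 := keyR w1 k1 _ (le_max_left _ _) hk1 hr1
    have a2 : w2 (max k1 k2) ≤ 0 := keyR w2 k2 _ (le_max_right _ _) hk2 hr2
    have a3 : w1 (max k1 k2) ≤ -1 ∨ w2 (max k1 k2) ≤ -1 := by
      rcases max_choice k1 k2 with h | h
      · left; rw [h]; exact hk1
      · right; rw [h]; exact hk2
    simp only [Pi.add_apply]
    omega
  · intro i hi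
    rw [lt_min_iff] at hi
    simp [Pi.add_apply, hl1 i hi.1, hl2 i hi.2]
  · intro i hi
    rw [max_lt_iff] at hi
    simp [Pi.add_apply, hr1 i hi.1, hr2 i hi.2]

lemma pprop_sum {n : ℕ} (l : Multiset (Fin n → ℤ)) (hne : l ≠ 0)
    (h : ∀ x ∈ l, Pprop x) : Pprop l.sum := by
  induction l using Multiset.induction with
  | empty => exact absurd rfl hne
  | cons a s ih =>
    rw [Multiset.sum_cons]
    by_cases hs : s = 0
    · subst hs; simpa using h a (by simp)
    · exact pprop_add (h a (by simp)) (ih hs (fun x hx => h x (by simp [hx])))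

theorem stmt8 (n : ℕ) (hn : 0 < n) (M : Matrix (Fin n) (Fin n) ℂ) (hskew : Mᵀ = -M)
    {V : Type*} [AddCommGroup V] [Module ℂ V] (β : Fin n → V)
    (hTLS : TLogSymp M β) (S : Set (Fin n → ℤ)) (hS : S ⊆ Sset M β)
    (hNB : ∀ θ ∈ S, NegBordered θ) :
    (∀ w ∈ SumGE S 1, ¬((∀ j, -1 ≤ w j) ∧ (Jset w).card ≤ 1)) ∧
    (∀ w ∈ SumGE S 2, ¬((∀ j, -1 ≤ w j) ∧ (Jset w).card ≤ 1)) ∧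
    (∀ w ∈ SumGE S 1, (∀ j, -1 ≤ w j) → (Jset w).card ≤ 2 → NegBordered w) := by
  have key : ∀ w ∈ SumGE S 1, Pprop w := by
    intro w hw
    simp only [SumGE, SumOf, Set.mem_setOf_eq] at hw
    obtain ⟨m, hm, l, hl, hcard, hsum⟩ := hw
    have hne : l ≠ 0 := by
      intro h; subst h; simp at hcard; omega
    have := pprop_sum l hne (fun x hx => negBordered_pprop (hNB x (hl x hx)))
    rwa [hsum] at this
  have main1 : ∀ w ∈ SumGE S 1, ¬((∀ j, -1 ≤ w j) ∧ (Jset w).card ≤ 1) := by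
    rintro w hw ⟨hge, hc⟩
    obtain ⟨j, k, hjk, hj, hk, _, _⟩ := key w hw
    have hjm : j ∈ Jset w := by
      simp only [Jset, Finset.mem_filter, Finset.mem_univ, true_and]
      have := hge j; omega
    have hkm : k ∈ Jset w := by
      simp only [Jset, Finset.mem_filter, Finset.mem_univ, true_and]
      have := hge k; omega
    have hsub : ({j, k} : Finset (Fin n)) ⊆ Jset w := by
      intro x hx
      rcases Finset.mem_insert.mp hx with h | h
      · exact h ▸ hjm
      · exact (Finset.mem_singleton.mp h) ▸ hkm
    have h2 : ({j, k} : Finset (Fin n)).card = 2 := Finset.card_pair (ne_of_lt hjk)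
    have := Finset.card_le_card hsub
    omega
  refine ⟨main1, ?_, ?_⟩
  · intro w hw
    obtain ⟨m, hm, hmem⟩ := hw
    exact main1 w ⟨m, by omega, hmem⟩
  · intro w hw hge hc
    obtain ⟨j, k, hjk, hj, hk, hl, hr⟩ := key w hw
    have hjv : w j = -1 := by have := hge j; omega
    have hkv : w k = -1 := by have := hge k; omega
    refine ⟨j, k, hjk, hjv, hkv, hl, hr, ?_⟩
    intro i hji hik
    by_contra hneg
    have hiv : w i = -1 := by have := hge i; omega
    have hsub : ({j, i, k} : Finset (Fin n)) ⊆ Jset w := by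
      intro x hx
      simp only [Finset.mem_insert, Finset.mem_singleton] at hx
      simp only [Jset, Finset.mem_filter, Finset.mem_univ, true_and]
      rcases hx with rfl | rfl | rfl <;> assumption
    have hji' : j ∉ ({i, k} : Finset (Fin n)) := by
      simp only [Finset.mem_insert, Finset.mem_singleton]
      push_neg
      exact ⟨ne_of_lt hji, ne_of_lt hjk⟩
    have h3 : ({j, i, k} : Finset (Fin n)).card = 3 := by
      rw [Finset.card_insert_of_notMem hji', Finset.card_pair (ne_of_lt hik)]
    have := Finset.card_le_card hsub
    omega
end
end
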